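/- arXiv:2202.13232 — 3 statements merged into one kernel-verified Lean document; each statement's English description precedes it below -/
import Mathlib

section
/- Every minimal left ideal I of (C,*) is a closed and convex subset of C. -/
/-!
For any `i ∈ I` the set `C * i` is a left ideal contained in `I`, so `I = C * i` by minimality.
Since `p ↦ p * i` is continuous and affine on `C`, this is the image of a compact convex set
under a continuous affine map, hence compact (so closed) and convex.
-/

/-- `I` is a left ideal of the semigroup `(C, mul)`: a nonempty subset of `C`
closed under left multiplication by elements of `C`. -/
def IsLeftIdeal {V : Type*} (C : Set V) (mul : V → V → V) (I : Set V) : Prop :=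
  I.Nonempty ∧ I ⊆ C ∧ ∀ c ∈ C, ∀ i ∈ I, mul c i ∈ I

/-- `I` is a minimal left ideal of the semigroup `(C, mul)`. -/
def IsMinimalLeftIdeal {V : Type*} (C : Set V) (mul : V → V → V) (I : Set V) : Prop :=
  IsLeftIdeal C mul I ∧ ∀ J : Set V, IsLeftIdeal C mul J → J ⊆ I → J = I

theorem Convex.image_of_map_convex_combination {𝕜 E F : Type*} [Ring 𝕜] [PartialOrder 𝕜]
    [IsOrderedRing 𝕜] [AddCommMonoid E] [Module 𝕜 E] [AddCommMonoid F] [Module 𝕜 F]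
    {s : Set E} (hs : Convex 𝕜 s) {f : E → F}
    (hf : ∀ a ∈ s, ∀ b ∈ s, ∀ r : 𝕜, 0 ≤ r → r ≤ 1 →
      f (r • a + (1 - r) • b) = r • f a + (1 - r) • f b) :
    Convex 𝕜 (f '' s) := by
  rintro _ ⟨a, ha, rfl⟩ _ ⟨b, hb, rfl⟩ r t hr ht hrt
  obtain rfl : t = 1 - r := eq_sub_of_add_eq' hrt
  exact ⟨r • a + (1 - r) • b, hs ha hb hr ht hrt, hf a ha b hb r hr (sub_nonneg.mp ht)⟩

section LeftIdeal

variable {V : Type*} {C : Set V} {mul : V → V → V}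

theorem isLeftIdeal_image_mul_right
    (hclosed : ∀ p ∈ C, ∀ q ∈ C, mul p q ∈ C)
    (hassoc : ∀ p ∈ C, ∀ q ∈ C, ∀ r ∈ C, mul (mul p q) r = mul p (mul q r))
    {i : V} (hi : i ∈ C) :
    IsLeftIdeal C mul ((fun p => mul p i) '' C) := by
  refine ⟨⟨mul i i, i, hi, rfl⟩, ?_, ?_⟩
  · rintro _ ⟨c, hc, rfl⟩
    exact hclosed c hc i hi
  · rintro c hc _ ⟨c', hc', rfl⟩
    exact ⟨mul c c', hclosed c hc c' hc', hassoc c hc c' hc' i hi⟩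

theorem IsMinimalLeftIdeal.eq_image_mul_right {I : Set V} (hI : IsMinimalLeftIdeal C mul I)
    (hclosed : ∀ p ∈ C, ∀ q ∈ C, mul p q ∈ C)
    (hassoc : ∀ p ∈ C, ∀ q ∈ C, ∀ r ∈ C, mul (mul p q) r = mul p (mul q r))
    {i : V} (hi : i ∈ I) :
    I = (fun p => mul p i) '' C := by
  obtain ⟨⟨-, hIC, hIideal⟩, hmin⟩ := hI
  refine (hmin _ (isLeftIdeal_image_mul_right hclosed hassoc (hIC hi)) ?_).symm
  rintro _ ⟨c, hc, rfl⟩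
  exact hIideal c hc i hi

end LeftIdeal

theorem minimal_left_ideal_closed_convex_general
    {V : Type*} [AddCommGroup V] [Module ℝ V] [TopologicalSpace V]
    [T2Space V]
    (C : Set V) (hCcomp : IsCompact C) (hCconv : Convex ℝ C)
    (mul : V → V → V)
    (hclosed : ∀ p ∈ C, ∀ q ∈ C, mul p q ∈ C)
    (hassoc : ∀ p ∈ C, ∀ q ∈ C, ∀ r ∈ C, mul (mul p q) r = mul p (mul q r))
    (hcont : ∀ q ∈ C, ContinuousOn (fun p => mul p q) C)
    (haffl : ∀ q ∈ C, ∀ a ∈ C, ∀ b ∈ C, ∀ r : ℝ, 0 ≤ r → r ≤ 1 →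
      mul (r • a + (1 - r) • b) q = r • mul a q + (1 - r) • mul b q)
    (I : Set V) (hI : IsMinimalLeftIdeal C mul I) :
    IsClosed I ∧ Convex ℝ I := by
  obtain ⟨i, hi⟩ := hI.1.1
  have hiC : i ∈ C := hI.1.2.1 hi
  rw [hI.eq_image_mul_right hclosed hassoc hi]
  exact ⟨(hCcomp.image_of_continuousOn (hcont i hiC)).isClosed,
    hCconv.image_of_map_convex_combination (haffl i hiC)⟩

/-- Every minimal left ideal of a compact convex left-continuous affine semigroup
is closed and convex. -/
theorem minimal_left_ideal_closed_convex
    {V : Type*} [AddCommGroup V] [Module ℝ V] [TopologicalSpace V]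
    [IsTopologicalAddGroup V] [ContinuousSMul ℝ V] [T2Space V] [LocallyConvexSpace ℝ V]
    (C : Set V) (hCne : C.Nonempty) (hCcomp : IsCompact C) (hCconv : Convex ℝ C)
    (mul : V → V → V)
    (hclosed : ∀ p ∈ C, ∀ q ∈ C, mul p q ∈ C)
    (hassoc : ∀ p ∈ C, ∀ q ∈ C, ∀ r ∈ C, mul (mul p q) r = mul p (mul q r))
    (hcont : ∀ q ∈ C, ContinuousOn (fun p => mul p q) C)
    (haffl : ∀ q ∈ C, ∀ a ∈ C, ∀ b ∈ C, ∀ r : ℝ, 0 ≤ r → r ≤ 1 →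
      mul (r • a + (1 - r) • b) q = r • mul a q + (1 - r) • mul b q)
    (I : Set V) (hI : IsMinimalLeftIdeal C mul I) :
    IsClosed I ∧ Convex ℝ I :=
  minimal_left_ideal_closed_convex_general C hCcomp hCconv mul hclosed hassoc hcont haffl I hI
end

section
/- Let I be a minimal left ideal of (C,*) and let μ ∈ I. Then I = {ν ∈ C : ν*μ = ν}. -/
/-!
Right multiplication by `μ` is a continuous affine self-map of the compact convex set `C`, so the
Cesàro means of any of its orbits are approximate fixed points (the defect of the `n`-th mean is
`(n + 1)⁻¹` times a vector of the bounded set `C - C`), and a cluster point of them is a fixed point.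
Hence `J = {ν ∈ C | ν * μ = ν}` is nonempty; by associativity it is a left ideal, and it lies in
`I` because `ν = ν * μ ∈ I`. Minimality of `I` gives `J = I`.
-/

open Filter Topology Function

section Semigroup

variable {V : Type*} {C I : Set V} {mul : V → V → V} {μ : V}

theorem isLeftIdeal_setOf_mul_eq_self (hμ : μ ∈ C)
    (hclosed : ∀ p ∈ C, ∀ q ∈ C, mul p q ∈ C)
    (hassoc : ∀ p ∈ C, ∀ q ∈ C, ∀ r ∈ C, mul (mul p q) r = mul p (mul q r))
    (hfix : ∃ ν ∈ C, mul ν μ = ν) :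
    IsLeftIdeal C mul {ν | ν ∈ C ∧ mul ν μ = ν} := by
  refine ⟨hfix, fun ν hν => hν.1, fun c hc i ⟨hiC, hi⟩ => ⟨hclosed c hc i hiC, ?_⟩⟩
  rw [hassoc c hc i hiC μ hμ, hi]

theorem IsMinimalLeftIdeal.eq_setOf_mul_eq_self (hI : IsMinimalLeftIdeal C mul I) (hμ : μ ∈ I)
    (hclosed : ∀ p ∈ C, ∀ q ∈ C, mul p q ∈ C)
    (hassoc : ∀ p ∈ C, ∀ q ∈ C, ∀ r ∈ C, mul (mul p q) r = mul p (mul q r))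
    (hfix : ∃ ν ∈ C, mul ν μ = ν) :
    I = {ν | ν ∈ C ∧ mul ν μ = ν} := by
  obtain ⟨⟨-, hIC, hIideal⟩, hmin⟩ := hI
  have hsub : {ν | ν ∈ C ∧ mul ν μ = ν} ⊆ I := fun ν ⟨hνC, hν⟩ => hν ▸ hIideal ν hνC μ hμ
  exact (hmin _ (isLeftIdeal_setOf_mul_eq_self (hIC hμ) hclosed hassoc hfix) hsub).symm

end Semigroup

theorem IsCompact.exists_fixedPoint_of_tendsto_sub {G ι : Type*} [AddCommGroup G]
    [TopologicalSpace G] [IsTopologicalAddGroup G] [T2Space G] {l : Filter ι} [l.NeBot]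
    {C : Set G} (hC : IsCompact C) {T : G → G} (hT : ContinuousOn T C) {x : ι → G}
    (hxC : ∀ i, x i ∈ C) (hx : Tendsto (fun i => T (x i) - x i) l (𝓝 0)) :
    ∃ y ∈ C, T y = y := by
  obtain ⟨y, hyC, hy⟩ := hC.exists_mapClusterPt (f := l) (u := x)
    (tendsto_principal.2 (Eventually.of_forall hxC))
  obtain ⟨U, hUl, hxy⟩ := mapClusterPt_iff_ultrafilter.1 hy
  have hxyC : Tendsto x U (𝓝[C] y) :=
    tendsto_nhdsWithin_iff.2 ⟨hxy, Eventually.of_forall hxC⟩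
  have hTy : Tendsto (fun i => T (x i)) U (𝓝 (T y)) := (hT y hyC).tendsto.comp hxyC
  have hy0 : Tendsto (fun i => T (x i)) U (𝓝 (y + 0)) := by
    simpa only [add_sub_cancel] using hxy.add (hx.mono_left hUl)
  exact ⟨y, hyC, by simpa only [add_zero] using tendsto_nhds_unique hTy hy0⟩

section Affine

variable {V : Type*} [AddCommGroup V] [Module ℝ V]

def AffineOn (C : Set V) (T : V → V) : Prop :=
  ∀ a ∈ C, ∀ b ∈ C, ∀ r : ℝ, 0 ≤ r → r ≤ 1 → T (r • a + (1 - r) • b) = r • T a + (1 - r) • T b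

/-- The average of `x, T x, …, T^[n] x`, accumulated by two-point convex combinations so that
only `AffineOn` is needed to push `T` through it. -/
noncomputable def orbitMean (T : V → V) (x : V) : ℕ → V
  | 0 => x
  | n + 1 => ((n : ℝ) + 2)⁻¹ • T^[n + 1] x + (1 - ((n : ℝ) + 2)⁻¹) • orbitMean T x n

variable {C : Set V} {T : V → V} {x : V}

lemma inv_natCast_add_two_mem_Icc (n : ℕ) : ((n : ℝ) + 2)⁻¹ ∈ Set.Icc (0 : ℝ) 1 :=
  ⟨by positivity, inv_le_one_of_one_le₀ (by linarith [n.cast_nonneg (α := ℝ)])⟩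

theorem orbitMean_mem (hCconv : Convex ℝ C) (hT : Set.MapsTo T C C) (hx : x ∈ C) (n : ℕ) :
    orbitMean T x n ∈ C := by
  induction n with
  | zero => exact hx
  | succ n ih =>
    obtain ⟨hr0, hr1⟩ := inv_natCast_add_two_mem_Icc n
    exact hCconv (hT.iterate (n + 1) hx) ih hr0 (by linarith) (by ring)

theorem map_orbitMean (hCconv : Convex ℝ C) (hT : Set.MapsTo T C C) (haff : AffineOn C T)
    (hx : x ∈ C) (n : ℕ) :
    T (orbitMean T x n) = orbitMean T x n + ((n : ℝ) + 1)⁻¹ • (T^[n + 1] x - x) := by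
  induction n with
  | zero => simp [orbitMean]
  | succ n ih =>
    obtain ⟨hr0, hr1⟩ := inv_natCast_add_two_mem_Icc n
    have hn : ((n : ℝ) + 1) ≠ 0 := by positivity
    rw [orbitMean, haff _ (hT.iterate (n + 1) hx) _ (orbitMean_mem hCconv hT hx n) _ hr0 hr1, ih,
      ← iterate_succ_apply' T (n + 1)]
    push_cast
    match_scalars <;> field_simp <;> ring

variable [TopologicalSpace V] [IsTopologicalAddGroup V] [ContinuousSMul ℝ V]

theorem tendsto_map_orbitMean_sub (hCcomp : IsCompact C) (hCconv : Convex ℝ C)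
    (hT : Set.MapsTo T C C) (haff : AffineOn C T) (hx : x ∈ C) :
    Tendsto (fun n => T (orbitMean T x n) - orbitMean T x n) atTop (𝓝 0) := by
  simp only [map_orbitMean hCconv hT haff hx, add_sub_cancel_left]
  have hinv : Tendsto (fun n : ℕ => ((n : ℝ) + 1)⁻¹) atTop (𝓝 0) := by
    simpa only [one_div] using tendsto_one_div_add_atTop_nhds_zero_nat (𝕜 := ℝ)
  exact ((hCcomp.isVonNBounded ℝ).sub (hCcomp.isVonNBounded ℝ)).smul_tendsto_zero
    (Eventually.of_forall fun n => Set.sub_mem_sub (hT.iterate (n + 1) hx) hx) hinv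

theorem Convex.exists_fixedPoint_of_isCompact [T2Space V] (hCconv : Convex ℝ C)
    (hCcomp : IsCompact C) (hx : x ∈ C) (hT : Set.MapsTo T C C) (hTcont : ContinuousOn T C)
    (haff : AffineOn C T) :
    ∃ y ∈ C, T y = y :=
  hCcomp.exists_fixedPoint_of_tendsto_sub hTcont (orbitMean_mem hCconv hT hx)
    (tendsto_map_orbitMean_sub hCcomp hCconv hT haff hx)

end Affine

theorem minimal_left_ideal_eq_fixed_points_general
    {V : Type*} [AddCommGroup V] [Module ℝ V] [TopologicalSpace V]
    [IsTopologicalAddGroup V] [ContinuousSMul ℝ V] [T2Space V]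
    (C : Set V) (hCcomp : IsCompact C) (hCconv : Convex ℝ C)
    (mul : V → V → V)
    (hclosed : ∀ p ∈ C, ∀ q ∈ C, mul p q ∈ C)
    (hassoc : ∀ p ∈ C, ∀ q ∈ C, ∀ r ∈ C, mul (mul p q) r = mul p (mul q r))
    (hcont : ∀ q ∈ C, ContinuousOn (fun p => mul p q) C)
    (haffl : ∀ q ∈ C, ∀ a ∈ C, ∀ b ∈ C, ∀ r : ℝ, 0 ≤ r → r ≤ 1 →
      mul (r • a + (1 - r) • b) q = r • mul a q + (1 - r) • mul b q)
    (I : Set V) (hI : IsMinimalLeftIdeal C mul I)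
    (μ : V) (hμ : μ ∈ I) :
    I = {ν | ν ∈ C ∧ mul ν μ = ν} := by
  have hμC : μ ∈ C := hI.1.2.1 hμ
  have hfix : ∃ ν ∈ C, mul ν μ = ν :=
    hCconv.exists_fixedPoint_of_isCompact hCcomp hμC (fun p hp => hclosed p hp μ hμC)
      (hcont μ hμC) (haffl μ hμC)
  exact hI.eq_setOf_mul_eq_self hμ hclosed hassoc hfix

/-- A minimal left ideal `I` of a compact convex left-continuous affine semigroup
equals the set of elements `ν ∈ C` with `ν * μ = ν`, for any fixed `μ ∈ I`. -/
theorem minimal_left_ideal_eq_fixed_points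
    {V : Type*} [AddCommGroup V] [Module ℝ V] [TopologicalSpace V]
    [IsTopologicalAddGroup V] [ContinuousSMul ℝ V] [T2Space V] [LocallyConvexSpace ℝ V]
    (C : Set V) (hCne : C.Nonempty) (hCcomp : IsCompact C) (hCconv : Convex ℝ C)
    (mul : V → V → V)
    (hclosed : ∀ p ∈ C, ∀ q ∈ C, mul p q ∈ C)
    (hassoc : ∀ p ∈ C, ∀ q ∈ C, ∀ r ∈ C, mul (mul p q) r = mul p (mul q r))
    (hcont : ∀ q ∈ C, ContinuousOn (fun p => mul p q) C)
    (haffl : ∀ q ∈ C, ∀ a ∈ C, ∀ b ∈ C, ∀ r : ℝ, 0 ≤ r → r ≤ 1 →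
      mul (r • a + (1 - r) • b) q = r • mul a q + (1 - r) • mul b q)
    (haffr : ∀ p ∈ C, ∀ a ∈ C, ∀ b ∈ C, ∀ r : ℝ, 0 ≤ r → r ≤ 1 →
      mul p (r • a + (1 - r) • b) = r • mul p a + (1 - r) • mul p b)
    (I : Set V) (hI : IsMinimalLeftIdeal C mul I)
    (μ : V) (hμ : μ ∈ I) :
    I = {ν | ν ∈ C ∧ mul ν μ = ν} :=
  minimal_left_ideal_eq_fixed_points_general C hCcomp hCconv mul hclosed hassoc hcont haffl I hI μ
    hμ
end

section
/- Let V be a Hausdorff locally convex topological vector space over ℝ and let C ⊆ V be a nonempty compact convex set carrying a group operation * (associative, with identity element e and inverses) such that for every a ∈ C the left translation x ↦ a*x is affine. Then C is a singleton, C = {e}. (There are no nontrivial compact convex groups with affine left translations.) -/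
/-!
By Krein–Milman the compact set `C` has an extreme point `z`. An injective affine self-map of
a set pulls extreme points back to extreme points; applied to `x ↦ z * x`, which sends `e`
to `z`, this makes `e` extreme, and applied to `x ↦ a⁻¹ * x`, which sends `a` to `e`, it makes
every `a ∈ C` extreme. But a convex set with two distinct points has a non-extreme one: their
midpoint.
-/

open Set

section Convexity

variable {𝕜 E F : Type*} [Field 𝕜] [LinearOrder 𝕜] [IsStrictOrderedRing 𝕜]
  [AddCommGroup E] [Module 𝕜 E] [AddCommGroup F] [Module 𝕜 F]

variable (𝕜) in
def IsAffineOn (s : Set E) (f : E → F) : Prop :=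
  ∀ x ∈ s, ∀ y ∈ s, ∀ r : 𝕜, 0 ≤ r → r ≤ 1 → f (r • x + (1 - r) • y) = r • f x + (1 - r) • f y

theorem IsAffineOn.mapsTo_openSegment {s : Set E} {f : E → F} (hf : IsAffineOn 𝕜 s f)
    {x y : E} (hx : x ∈ s) (hy : y ∈ s) :
    MapsTo f (openSegment 𝕜 x y) (openSegment 𝕜 (f x) (f y)) := by
  rintro _ ⟨a, b, ha, hb, hab, rfl⟩
  obtain rfl : b = 1 - a := eq_sub_of_add_eq' hab
  exact ⟨a, 1 - a, ha, hb, hab, (hf x hx y hy a ha.le (by linarith)).symm⟩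

theorem IsAffineOn.mem_extremePoints_of_injOn {s : Set E} {f : E → E} (hf : IsAffineOn 𝕜 s f)
    (hmaps : MapsTo f s s) (hinj : InjOn f s) {w : E} (hw : w ∈ s)
    (hfw : f w ∈ s.extremePoints 𝕜) : w ∈ s.extremePoints 𝕜 := by
  refine mem_extremePoints.2 ⟨hw, fun x hx y hy hwxy => ?_⟩
  obtain ⟨hfx, hfy⟩ :=
    (mem_extremePoints.1 hfw).2 _ (hmaps hx) _ (hmaps hy) (hf.mapsTo_openSegment hx hy hwxy)
  exact ⟨hinj hx hw hfx, hinj hy hw hfy⟩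

theorem Convex.subsingleton_of_subset_extremePoints {s : Set E} (hs : Convex 𝕜 s)
    (h : s ⊆ s.extremePoints 𝕜) : s.Subsingleton := by
  intro x hx y hy
  have hmid : midpoint 𝕜 x y ∈ openSegment 𝕜 x y := midpoint_mem_openSegment x y
  obtain ⟨hxm, hym⟩ :=
    (mem_extremePoints.1 (h (hs.openSegment_subset hx hy hmid))).2 x hx y hy hmid
  exact hxm.trans hym.symm

end Convexity

theorem injOn_mul_left_of_exists_leftInverse {α : Type*} {s : Set α} {mul : α → α → α} {e : α}
    (hassoc : ∀ a ∈ s, ∀ b ∈ s, ∀ c ∈ s, mul (mul a b) c = mul a (mul b c))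
    (hone_mul : ∀ a ∈ s, mul e a = a) (hinv : ∀ a ∈ s, ∃ b ∈ s, mul b a = e)
    {a : α} (ha : a ∈ s) : InjOn (mul a) s := by
  intro u hu v hv huv
  obtain ⟨b, hb, hba⟩ := hinv a ha
  calc u = mul (mul b a) u := by rw [hba, hone_mul u hu]
    _ = mul (mul b a) v := by rw [hassoc b hb a ha u hu, huv, ← hassoc b hb a ha v hv]
    _ = v := by rw [hba, hone_mul v hv]

theorem compact_convex_group_trivial_general
    {V : Type*} [AddCommGroup V] [Module ℝ V] [TopologicalSpace V]
    [IsTopologicalAddGroup V] [ContinuousSMul ℝ V] [T2Space V] [LocallyConvexSpace ℝ V]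
    (C : Set V) (hCcomp : IsCompact C) (hCconv : Convex ℝ C)
    (mul : V → V → V) (e : V) (he : e ∈ C)
    (hclosed : ∀ a ∈ C, ∀ b ∈ C, mul a b ∈ C)
    (hassoc : ∀ a ∈ C, ∀ b ∈ C, ∀ c ∈ C, mul (mul a b) c = mul a (mul b c))
    (hid : ∀ a ∈ C, mul e a = a ∧ mul a e = a)
    (hinv : ∀ a ∈ C, ∃ b ∈ C, mul a b = e ∧ mul b a = e)
    (haff : ∀ a ∈ C, ∀ x ∈ C, ∀ y ∈ C, ∀ r : ℝ, 0 ≤ r → r ≤ 1 →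
      mul a (r • x + (1 - r) • y) = r • mul a x + (1 - r) • mul a y) :
    C = {e} := by
  have hinj : ∀ a ∈ C, InjOn (mul a) C := fun a ha =>
    injOn_mul_left_of_exists_leftInverse hassoc (fun b hb => (hid b hb).1)
      (fun b hb => (hinv b hb).imp fun _ h => ⟨h.1, h.2.2⟩) ha
  have hpullback : ∀ a ∈ C, ∀ w ∈ C, mul a w ∈ C.extremePoints ℝ → w ∈ C.extremePoints ℝ :=
    fun a ha w hw => IsAffineOn.mem_extremePoints_of_injOn (haff a ha) (hclosed a ha) (hinj a ha) hw
  obtain ⟨z, hz⟩ := hCcomp.extremePoints_nonempty ⟨e, he⟩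
  have hzC : z ∈ C := extremePoints_subset hz
  have he_ext : e ∈ C.extremePoints ℝ := hpullback z hzC e he (by rwa [(hid z hzC).2])
  have hall_ext : C ⊆ C.extremePoints ℝ := fun a ha => by
    obtain ⟨b, hb, -, hba⟩ := hinv a ha
    exact hpullback b hb a ha (hba ▸ he_ext)
  exact (hCconv.subsingleton_of_subset_extremePoints hall_ext).eq_singleton_of_mem he

/-- There are no nontrivial compact convex groups with affine left translations:
if a nonempty compact convex subset `C` of a Hausdorff locally convex real
topological vector space carries a group structure whose left translations are
affine, then `C` is the singleton of the identity. -/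
theorem compact_convex_group_trivial
    {V : Type*} [AddCommGroup V] [Module ℝ V] [TopologicalSpace V]
    [IsTopologicalAddGroup V] [ContinuousSMul ℝ V] [T2Space V] [LocallyConvexSpace ℝ V]
    (C : Set V) (hCne : C.Nonempty) (hCcomp : IsCompact C) (hCconv : Convex ℝ C)
    (mul : V → V → V) (e : V) (he : e ∈ C)
    (hclosed : ∀ a ∈ C, ∀ b ∈ C, mul a b ∈ C)
    (hassoc : ∀ a ∈ C, ∀ b ∈ C, ∀ c ∈ C, mul (mul a b) c = mul a (mul b c))
    (hid : ∀ a ∈ C, mul e a = a ∧ mul a e = a)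
    (hinv : ∀ a ∈ C, ∃ b ∈ C, mul a b = e ∧ mul b a = e)
    (haff : ∀ a ∈ C, ∀ x ∈ C, ∀ y ∈ C, ∀ r : ℝ, 0 ≤ r → r ≤ 1 →
      mul a (r • x + (1 - r) • y) = r • mul a x + (1 - r) • mul a y) :
    C = {e} :=
  compact_convex_group_trivial_general C hCcomp hCconv mul e he hclosed hassoc hid hinv haff
end
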